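/- arXiv:1203.2427 — 2 statements merged into one kernel-verified Lean document; each statement's English description precedes it below -/
import Mathlib

section
/- For complex ζ with 0 < Re ζ < 1 and ε > 0, the integral ∫₀^∞ e^{-εs} cos(s) s^(ζ-1) ds converges, and its limit as ε → 0⁺ equals cos(πζ/2)·Γ(ζ). -/
/-!
Since `e^{-εs} cos s = (e^{-(ε-i)s} + e^{-(ε+i)s}) / 2`, everything reduces to the Gamma integral
`∫₀^∞ s^{ζ-1} e^{-bs} ds = (1/b)^ζ Γ(ζ)` for `Re b > 0`. For real `b > 0` this is the substitution
`s ↦ s/b` in Euler's integral; both sides are holomorphic in `b` on the right half-plane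
(differentiation under the integral sign), so the identity theorem extends it. The regularized
integral is therefore `((1/(ε-i))^ζ + (1/(ε+i))^ζ) / 2 · Γ(ζ)`, which is continuous in `ε` at `0`,
where it equals `(i^ζ + (-i)^ζ) / 2 · Γ(ζ) = cos(πζ/2) Γ(ζ)`.
-/

open MeasureTheory Filter Set Complex Topology

lemma integrableOn_rpow_mul_exp_neg_mul {s c : ℝ} (hs : -1 < s) (hc : 0 < c) :
    IntegrableOn (fun t : ℝ => t ^ s * Real.exp (-(c * t))) (Ioi 0) := by
  simpa only [Real.rpow_one, neg_mul] using integrableOn_rpow_mul_exp_neg_mul_rpow hs zero_lt_one hc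

lemma continuousOn_ofReal_cpow_mul_cexp (a b : ℂ) :
    ContinuousOn (fun t : ℝ => (t : ℂ) ^ a * cexp (-(b * t))) (Ioi 0) :=
  (continuous_ofReal.continuousOn.cpow_const fun t ht => ofReal_mem_slitPlane.2 ht).mul
    (by fun_prop)

lemma norm_ofReal_cpow_mul_cexp {t : ℝ} (ht : 0 < t) (a b : ℂ) :
    ‖(t : ℂ) ^ a * cexp (-(b * t))‖ = t ^ a.re * Real.exp (-(b.re * t)) := by
  rw [norm_mul, norm_exp, norm_cpow_eq_rpow_re_of_pos ht]
  simp

lemma integrableOn_ofReal_cpow_mul_cexp {a b : ℂ} (ha : -1 < a.re) (hb : 0 < b.re) :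
    IntegrableOn (fun t : ℝ => (t : ℂ) ^ a * cexp (-(b * t))) (Ioi 0) := by
  refine Integrable.mono' (integrableOn_rpow_mul_exp_neg_mul ha hb)
    ((continuousOn_ofReal_cpow_mul_cexp a b).aestronglyMeasurable measurableSet_Ioi) ?_
  filter_upwards [ae_restrict_mem measurableSet_Ioi] with t ht
  exact (norm_ofReal_cpow_mul_cexp ht a b).le

lemma half_re_lt_re_of_mem_ball {b₀ x : ℂ} (hx : x ∈ Metric.ball b₀ (b₀.re / 2)) :
    b₀.re / 2 < x.re := by
  have := (abs_re_le_norm (x - b₀)).trans_lt (mem_ball_iff_norm.1 hx)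
  rw [sub_re, abs_sub_lt_iff] at this
  linarith

lemma differentiableOn_integral_ofReal_cpow_mul_cexp {a : ℂ} (ha : -1 < a.re) :
    DifferentiableOn ℂ (fun b : ℂ => ∫ t in Ioi (0 : ℝ), (t : ℂ) ^ a * cexp (-(b * t)))
      {b | 0 < b.re} := by
  intro b₀ (hb₀ : 0 < b₀.re)
  have hε : 0 < b₀.re / 2 := half_pos hb₀
  have hderiv := hasDerivAt_integral_of_dominated_loc_of_deriv_le
    (F' := fun x (t : ℝ) => -(t : ℂ) * ((t : ℂ) ^ a * cexp (-(x * t))))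
    (bound := fun t => t ^ (a.re + 1) * Real.exp (-(b₀.re / 2 * t)))
    (Metric.ball_mem_nhds b₀ hε)
    (.of_forall fun x => (continuousOn_ofReal_cpow_mul_cexp a x).aestronglyMeasurable
      measurableSet_Ioi)
    (integrableOn_ofReal_cpow_mul_cexp ha hb₀)
    ((continuous_ofReal.continuousOn.neg.mul (continuousOn_ofReal_cpow_mul_cexp a b₀))
      |>.aestronglyMeasurable measurableSet_Ioi)
    ?_ (integrableOn_rpow_mul_exp_neg_mul (by linarith) hε) ?_
  · exact hderiv.2.differentiableAt.differentiableWithinAt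
  · filter_upwards [ae_restrict_mem measurableSet_Ioi] with t (ht : 0 < t) x hx
    rw [norm_mul, norm_ofReal_cpow_mul_cexp ht, norm_neg, norm_real, Real.norm_of_nonneg ht.le,
      Real.rpow_add_one ht.ne', mul_comm t, mul_right_comm]
    gcongr
    exact (half_re_lt_re_of_mem_ball hx).le
  · refine .of_forall fun t x _ => ?_
    have hlin : HasDerivAt (fun y : ℂ => -(y * t)) (-t) x := by
      simpa only [mul_neg] using hasDerivAt_mul_const (x := x) (-(t : ℂ))
    exact (hlin.cexp.const_mul _).congr_deriv (by ring)

lemma integral_ofReal_cpow_mul_cexp_neg_mul_Ioi {a b : ℂ} (ha : 0 < a.re) (hb : 0 < b.re) :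
    ∫ t in Ioi (0 : ℝ), (t : ℂ) ^ (a - 1) * cexp (-(b * t)) = (1 / b) ^ a * Gamma a := by
  let U : Set ℂ := {z | 0 < z.re}
  have hU : IsOpen U := isOpen_lt continuous_const continuous_re
  have hint : AnalyticOnNhd ℂ
      (fun b : ℂ => ∫ t in Ioi (0 : ℝ), (t : ℂ) ^ (a - 1) * cexp (-(b * t))) U :=
    (differentiableOn_integral_ofReal_cpow_mul_cexp (by simpa using ha)).analyticOnNhd hU
  have hpow : AnalyticOnNhd ℂ (fun b : ℂ => (1 / b) ^ a * Gamma a) U := by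
    refine DifferentiableOn.analyticOnNhd (fun z (hz : 0 < z.re) => ?_) hU
    have hz0 : z ≠ 0 := fun h => by simp [h] at hz
    have hinv : 1 / z ∈ slitPlane := by
      rw [mem_slitPlane_iff, one_div, inv_re]
      exact Or.inl (div_pos hz (normSq_pos.2 hz0))
    exact ((((differentiableAt_const 1).div differentiableAt_id hz0).cpow_const hinv).mul_const
      _).differentiableWithinAt
  have hreal : ∃ᶠ z in 𝓝[≠] (1 : ℂ),
      ∫ t in Ioi (0 : ℝ), (t : ℂ) ^ (a - 1) * cexp (-(z * t)) = (1 / z) ^ a * Gamma a := by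
    have hofReal : Tendsto ((↑) : ℝ → ℂ) (𝓝[≠] 1) (𝓝[≠] 1) :=
      continuous_ofReal.continuousWithinAt.tendsto_nhdsWithin fun _ _ ↦ by simp_all
    refine hofReal.frequently (Eventually.frequently ?_)
    filter_upwards [nhdsWithin_le_nhds (eventually_gt_nhds one_pos)] with r hr
    exact integral_cpow_mul_exp_neg_mul_Ioi ha hr
  exact hint.eqOn_of_preconnected_of_frequently_eq hpow (convex_halfSpace_re_gt 0).isPreconnected
    (by simp [U]) hreal hb

lemma cos_pi_mul_div_two_eq_avg_I_cpow (ζ : ℂ) :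
    cos (Real.pi * ζ / 2) = (I ^ ζ + (-I) ^ ζ) / 2 := by
  rw [cpow_def_of_ne_zero I_ne_zero, cpow_def_of_ne_zero (neg_ne_zero.2 I_ne_zero), log_I,
    log_neg_I, cos]
  ring_nf

lemma tendsto_one_div_ofReal_add_cpow {c : ℂ} (hc : 1 / c ∈ slitPlane) (ζ : ℂ) :
    Tendsto (fun ε : ℝ => (1 / (ε + c)) ^ ζ) (𝓝 0) (𝓝 ((1 / c) ^ ζ)) := by
  have hc0 : c ≠ 0 := by rintro rfl; simp at hc
  have hdiv : Tendsto (fun ε : ℝ => 1 / ((ε : ℂ) + c)) (𝓝 0) (𝓝 (1 / c)) := by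
    simpa only [one_div, ofReal_zero, zero_add] using
      ((continuous_ofReal.tendsto 0).add_const c).inv₀ (by simpa using hc0)
  exact (continuousAt_cpow_const hc).tendsto.comp hdiv

lemma tendsto_avg_one_div_ofReal_sub_I_cpow_add_I_cpow (ζ : ℂ) :
    Tendsto (fun ε : ℝ => ((1 / (ε - I)) ^ ζ + (1 / (ε + I)) ^ ζ) / 2) (𝓝 0)
      (𝓝 (cos (Real.pi * ζ / 2))) := by
  have h₁ := tendsto_one_div_ofReal_add_cpow (c := -I) (by simp [mem_slitPlane_iff]) ζ
  have h₂ := tendsto_one_div_ofReal_add_cpow (c := I) (by simp [mem_slitPlane_iff]) ζ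
  rw [cos_pi_mul_div_two_eq_avg_I_cpow]
  simp only [← sub_eq_add_neg, one_div, inv_neg, inv_I, neg_neg] at h₁ h₂ ⊢
  exact (h₁.add h₂).div_const 2

lemma exp_neg_mul_mul_cos_mul_cpow_eq (a : ℂ) (ε s : ℝ) :
    (Real.exp (-(ε * s)) : ℂ) * cos s * (s : ℂ) ^ a
      = ((s : ℂ) ^ a * cexp (-((ε - I) * s)) + (s : ℂ) ^ a * cexp (-((ε + I) * s))) / 2 := by
  have hsplit : ∀ c : ℂ, cexp (-((ε + c) * s)) = cexp (-(ε * s)) * cexp (-(c * s)) := fun c => by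
    rw [← exp_add]; ring_nf
  rw [cos, ofReal_exp, sub_eq_add_neg, hsplit, hsplit]
  push_cast
  ring_nf

section AbelRegularization

variable {ζ : ℂ} (hζ : 0 < ζ.re) {ε : ℝ} (hε : 0 < ε)
include hζ hε

lemma integrableOn_exp_neg_mul_mul_cos_mul_cpow :
    IntegrableOn (fun s : ℝ => (Real.exp (-(ε * s)) : ℂ) * cos s * (s : ℂ) ^ (ζ - 1)) (Ioi 0) := by
  simp only [exp_neg_mul_mul_cos_mul_cpow_eq]
  refine ((integrableOn_ofReal_cpow_mul_cexp ?_ ?_).add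
    (integrableOn_ofReal_cpow_mul_cexp ?_ ?_)).div_const 2 <;> simpa

lemma integral_exp_neg_mul_mul_cos_mul_cpow :
    ∫ s in Ioi (0 : ℝ), (Real.exp (-(ε * s)) : ℂ) * cos s * (s : ℂ) ^ (ζ - 1)
      = ((1 / (ε - I)) ^ ζ + (1 / (ε + I)) ^ ζ) / 2 * Gamma ζ := by
  simp only [exp_neg_mul_mul_cos_mul_cpow_eq]
  rw [integral_div, integral_add (integrableOn_ofReal_cpow_mul_cexp ?_ ?_)
    (integrableOn_ofReal_cpow_mul_cexp ?_ ?_), integral_ofReal_cpow_mul_cexp_neg_mul_Ioi hζ,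
    integral_ofReal_cpow_mul_cexp_neg_mul_Ioi hζ]
  · ring
  all_goals simpa

end AbelRegularization

theorem cos_power_abel_regularization_general (ζ : ℂ) (h0 : 0 < ζ.re) :
    (∀ ε : ℝ, 0 < ε → IntegrableOn
        (fun s : ℝ => (Real.exp (-(ε * s)) : ℂ) * Complex.cos s * (s : ℂ) ^ (ζ - 1))
        (Set.Ioi 0)) ∧
    Tendsto
      (fun ε : ℝ => ∫ s in Set.Ioi (0:ℝ),
        (Real.exp (-(ε * s)) : ℂ) * Complex.cos s * (s : ℂ) ^ (ζ - 1))
      (nhdsWithin 0 (Set.Ioi 0))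
      (nhds (Complex.cos (Real.pi * ζ / 2) * Complex.Gamma ζ)) := by
  refine ⟨fun ε hε => integrableOn_exp_neg_mul_mul_cos_mul_cpow h0 hε, ?_⟩
  have hlim := (tendsto_avg_one_div_ofReal_sub_I_cpow_add_I_cpow ζ).mul_const (Gamma ζ)
  refine (hlim.mono_left nhdsWithin_le_nhds).congr' ?_
  filter_upwards [self_mem_nhdsWithin] with ε hε
  exact (integral_exp_neg_mul_mul_cos_mul_cpow h0 hε).symm

/-- Abel regularization: for `0 < Re ζ < 1` and `ε > 0`, the integral
`∫₀^∞ e^{-εs} cos(s) s^(ζ-1) ds` converges, and as `ε → 0⁺` it tends to `cos(πζ/2) Γ(ζ)`. -/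
theorem cos_power_abel_regularization (ζ : ℂ) (h0 : 0 < ζ.re) (h1 : ζ.re < 1) :
    (∀ ε : ℝ, 0 < ε → IntegrableOn
        (fun s : ℝ => (Real.exp (-(ε * s)) : ℂ) * Complex.cos s * (s : ℂ) ^ (ζ - 1))
        (Set.Ioi 0)) ∧
    Tendsto
      (fun ε : ℝ => ∫ s in Set.Ioi (0:ℝ),
        (Real.exp (-(ε * s)) : ℂ) * Complex.cos s * (s : ℂ) ^ (ζ - 1))
      (nhdsWithin 0 (Set.Ioi 0))
      (nhds (Complex.cos (Real.pi * ζ / 2) * Complex.Gamma ζ)) :=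
  cos_power_abel_regularization_general ζ h0
end

section
/- For every δ with 0 < δ < 1/2 there exists a constant C(δ) < ∞ such that for all ζ in the strip δ < Re ζ < 1 - δ and all R ∈ (0,∞), |∫₀^R cos(s)·s^(ζ-1) ds| ≤ C(δ)·e^{(π/2)|Im ζ|}. -/
/-!
Split the integral at `1`. On `(0, 1]` the trivial bound `|cos s · s^(ζ-1)| ≤ s^(Re ζ - 1)`
gives at most `1 / Re ζ`. On `[1, R]` one integration by parts against `sin` leaves boundary
terms of size at most `1` and the integral of `|ζ - 1| s^(Re ζ - 2)`, which is at most
`|ζ - 1| / (1 - Re ζ)`. Finally `|ζ - 1| ≤ 1 + |Im ζ| ≤ exp (π/2 · |Im ζ|)` in the strip.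
-/

open MeasureTheory intervalIntegral Set
open scoped Interval

lemma norm_mul_ofReal_cpow_le {z : ℂ} (hz : ‖z‖ ≤ 1) {s : ℝ} (hs : 0 < s) (w : ℂ) :
    ‖z * (s : ℂ) ^ w‖ ≤ s ^ w.re := by
  rw [norm_mul, Complex.norm_cpow_eq_rpow_re_of_pos hs]
  exact mul_le_of_le_one_left (by positivity) hz

lemma norm_cos_ofReal_le_one (s : ℝ) : ‖Complex.cos s‖ ≤ 1 := by
  rw [← Complex.ofReal_cos, Complex.norm_real, Real.norm_eq_abs]
  exact Real.abs_cos_le_one s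

lemma norm_sin_ofReal_le_one (s : ℝ) : ‖Complex.sin s‖ ≤ 1 := by
  rw [← Complex.ofReal_sin, Complex.norm_real, Real.norm_eq_abs]
  exact Real.abs_sin_le_one s

lemma intervalIntegrable_cos_mul_cpow {w : ℂ} (hw : -1 < w.re) (a b : ℝ) :
    IntervalIntegrable (fun s : ℝ => Complex.cos s * (s : ℂ) ^ w) volume a b :=
  (intervalIntegrable_cpow' hw).continuousOn_mul (by fun_prop)

lemma integral_one_rpow_sub_one_le {σ : ℝ} (hσ : σ < 0) {R : ℝ} (hR : 1 ≤ R) :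
    ∫ s in (1 : ℝ)..R, s ^ (σ - 1) ≤ 1 / -σ := by
  have h0 : (0 : ℝ) ∉ [[1, R]] := by
    rw [uIcc_of_le hR]
    exact fun h => absurd h.1 (by norm_num)
  rw [integral_rpow (Or.inr ⟨by linarith, h0⟩), sub_add_cancel, Real.one_rpow,
    ← neg_div_neg_eq, neg_sub]
  gcongr
  · linarith
  · exact sub_le_self _ (Real.rpow_nonneg (by linarith) _)

lemma norm_integral_cos_mul_cpow_le_of_le_one {w : ℂ} (hw : -1 < w.re) {r : ℝ} (hr₀ : 0 ≤ r)
    (hr₁ : r ≤ 1) :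
    ‖∫ s in (0 : ℝ)..r, Complex.cos s * (s : ℂ) ^ w‖ ≤ 1 / (w.re + 1) := calc
  _ ≤ ∫ s in (0 : ℝ)..r, s ^ w.re :=
      norm_integral_le_of_norm_le hr₀
        (ae_of_all _ fun s hs => norm_mul_ofReal_cpow_le (norm_cos_ofReal_le_one s) hs.1 w)
        (intervalIntegrable_rpow' hw)
  _ = r ^ (w.re + 1) / (w.re + 1) := by
      rw [integral_rpow (Or.inl hw), Real.zero_rpow (by linarith), sub_zero]
  _ ≤ 1 / (w.re + 1) := by
      have : 0 < w.re + 1 := by linarith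
      gcongr
      exact Real.rpow_le_one hr₀ hr₁ this.le

lemma norm_integral_one_mul_cpow_sub_one_mul_sin_le {w : ℂ} (hw : w.re < 0) {R : ℝ}
    (hR : 1 ≤ R) :
    ‖∫ x in (1 : ℝ)..R, w * (x : ℂ) ^ (w - 1) * Complex.sin x‖ ≤ ‖w‖ / -w.re := calc
  _ ≤ ∫ x in (1 : ℝ)..R, ‖w‖ * x ^ (w.re - 1) := by
      refine norm_integral_le_of_norm_le hR (ae_of_all _ fun x hx => ?_) ?_
      · have hx₀ : 0 < x := by linarith [hx.1]
        rw [mul_assoc, mul_comm _ (Complex.sin x), norm_mul]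
        gcongr
        simpa using norm_mul_ofReal_cpow_le (norm_sin_ofReal_le_one x) hx₀ (w - 1)
      · refine (intervalIntegrable_rpow (Or.inr fun h => ?_)).const_mul _
        rw [uIcc_of_le hR] at h
        linarith [h.1]
  _ ≤ ‖w‖ * (1 / -w.re) := by
      rw [intervalIntegral.integral_const_mul]
      gcongr
      exact integral_one_rpow_sub_one_le hw hR
  _ = ‖w‖ / -w.re := by ring

lemma norm_integral_one_cos_mul_cpow_le {w : ℂ} (hw : w.re < 0) {R : ℝ} (hR : 1 ≤ R) :
    ‖∫ s in (1 : ℝ)..R, Complex.cos s * (s : ℂ) ^ w‖ ≤ 2 + ‖w‖ / -w.re := by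
  have hpos : ∀ x ∈ [[(1 : ℝ), R]], 0 < x := fun x hx => by
    rw [uIcc_of_le hR] at hx; linarith [hx.1]
  have hw₀ : w ≠ 0 := fun h => by simp [h] at hw
  have hderiv : ∀ x ∈ [[(1 : ℝ), R]],
      HasDerivAt (fun s : ℝ => (s : ℂ) ^ w) (w * (x : ℂ) ^ (w - 1)) x :=
    fun x hx => hasDerivAt_ofReal_cpow_const (hpos x hx).ne' hw₀
  have hderiv_cont : ContinuousOn (fun x : ℝ => w * (x : ℂ) ^ (w - 1)) [[(1 : ℝ), R]] :=
    continuousOn_const.mul <| Complex.continuous_ofReal.continuousOn.cpow_const fun x hx =>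
      Complex.ofReal_mem_slitPlane.mpr (hpos x hx)
  have hibp := intervalIntegral.integral_mul_deriv_eq_deriv_mul hderiv
    (fun x _ => (Complex.hasDerivAt_sin x).comp_ofReal) hderiv_cont.intervalIntegrable
    ((by fun_prop : Continuous fun s : ℝ => Complex.cos s).intervalIntegrable _ _)
  have hboundary : ∀ x : ℝ, 1 ≤ x → ‖(x : ℂ) ^ w * Complex.sin x‖ ≤ 1 := fun x hx => by
    rw [mul_comm]
    refine (norm_mul_ofReal_cpow_le (norm_sin_ofReal_le_one x) (by linarith) w).trans ?_
    exact Real.rpow_le_one_of_one_le_of_nonpos hx hw.le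
  calc _ = ‖∫ x in (1 : ℝ)..R, (x : ℂ) ^ w * Complex.cos x‖ := by simp_rw [mul_comm]
    _ ≤ ‖(R : ℂ) ^ w * Complex.sin R‖ + ‖(1 : ℝ) ^ w * Complex.sin (1 : ℝ)‖
        + ‖∫ x in (1 : ℝ)..R, w * (x : ℂ) ^ (w - 1) * Complex.sin x‖ := by
      rw [hibp]
      exact (norm_sub_le _ _).trans (add_le_add_left (norm_sub_le _ _) _)
    _ ≤ 1 + 1 + ‖w‖ / -w.re := by
      gcongr
      exacts [hboundary R hR, hboundary 1 le_rfl,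
        norm_integral_one_mul_cpow_sub_one_mul_sin_le hw hR]
    _ = 2 + ‖w‖ / -w.re := by norm_num

lemma norm_integral_cos_mul_cpow_le {w : ℂ} (hw₀ : -1 < w.re) (hw₁ : w.re < 0) {R : ℝ}
    (hR : 0 ≤ R) :
    ‖∫ s in (0 : ℝ)..R, Complex.cos s * (s : ℂ) ^ w‖ ≤ 1 / (w.re + 1) + (2 + ‖w‖ / -w.re) := by
  have htail : 0 ≤ 2 + ‖w‖ / -w.re := by
    have : 0 < -w.re := by linarith
    positivity
  rcases le_total R 1 with hR₁ | hR₁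
  · exact (norm_integral_cos_mul_cpow_le_of_le_one hw₀ hR hR₁).trans (le_add_of_nonneg_right htail)
  · rw [← integral_add_adjacent_intervals (intervalIntegrable_cos_mul_cpow hw₀ 0 1)
      (intervalIntegrable_cos_mul_cpow hw₀ 1 R)]
    exact (norm_add_le _ _).trans (add_le_add
      (norm_integral_cos_mul_cpow_le_of_le_one hw₀ zero_le_one le_rfl)
      (norm_integral_one_cos_mul_cpow_le hw₁ hR₁))

lemma norm_sub_one_le_exp_pi_div_two_mul_abs_im {ζ : ℂ} (h₀ : 0 ≤ ζ.re) (h₁ : ζ.re ≤ 1) :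
    ‖ζ - 1‖ ≤ Real.exp (Real.pi / 2 * |ζ.im|) := calc
  _ ≤ |(ζ - 1).re| + |(ζ - 1).im| := Complex.norm_le_abs_re_add_abs_im _
  _ ≤ |ζ.im| + 1 := by
      simp only [Complex.sub_re, Complex.one_re, Complex.sub_im, Complex.one_im, sub_zero]
      linarith [abs_le.mpr (⟨by linarith, by linarith⟩ : -1 ≤ ζ.re - 1 ∧ ζ.re - 1 ≤ 1)]
  _ ≤ Real.exp |ζ.im| := Real.add_one_le_exp _
  _ ≤ Real.exp (Real.pi / 2 * |ζ.im|) := by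
      gcongr
      exact le_mul_of_one_le_left (abs_nonneg _) (by linarith [Real.pi_gt_three])

theorem cos_power_partial_integral_bound_general (δ : ℝ) (hδ0 : 0 < δ) :
    ∃ C : ℝ, ∀ (ζ : ℂ) (R : ℝ), δ < ζ.re → ζ.re < 1 - δ → 0 < R →
      ‖∫ s in (0:ℝ)..R, Complex.cos s * (s : ℂ) ^ (ζ - 1)‖
        ≤ C * Real.exp (Real.pi / 2 * |ζ.im|) := by
  refine ⟨2 + 2 / δ, fun ζ R hσ₀ hσ₁ hR => ?_⟩
  set E := Real.exp (Real.pi / 2 * |ζ.im|)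
  have hE : 1 ≤ E := Real.one_le_exp (by positivity)
  have hw : ‖ζ - 1‖ ≤ E := norm_sub_one_le_exp_pi_div_two_mul_abs_im (by linarith) (by linarith)
  have hre : (ζ - 1).re = ζ.re - 1 := by simp
  have hδE : 1 / δ ≤ E / δ := by gcongr
  calc _ ≤ 1 / ((ζ - 1).re + 1) + (2 + ‖ζ - 1‖ / -(ζ - 1).re) :=
        norm_integral_cos_mul_cpow_le (by linarith) (by linarith) hR.le
    _ ≤ 1 / δ + (2 + E / δ) := by
        rw [hre]
        gcongr <;> linarith
    _ ≤ (2 + 2 / δ) * E := by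
        rw [add_mul, div_mul_eq_mul_div, mul_div_assoc]
        linarith

/-- Uniform bound on partial cosine-Mellin integrals in the strip `δ < Re ζ < 1 - δ`. -/
theorem cos_power_partial_integral_bound (δ : ℝ) (hδ0 : 0 < δ) (hδ1 : δ < 1/2) :
    ∃ C : ℝ, ∀ (ζ : ℂ) (R : ℝ), δ < ζ.re → ζ.re < 1 - δ → 0 < R →
      ‖∫ s in (0:ℝ)..R, Complex.cos s * (s : ℂ) ^ (ζ - 1)‖
        ≤ C * Real.exp (Real.pi / 2 * |ζ.im|) :=
  cos_power_partial_integral_bound_general δ hδ0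
end
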